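/- Let w > 0, σ > 0, N ≥ 1. Let x belong to the feasibility region of HMPC, let (x*, u*, x̂*, û*) with x̂* = (x̂_e*, x̂_s*, x̂_c*), û* = (û_e*, û_s*, û_c*) be an optimal solution of the HMPC problem at state x with reference parameters (r_x, r_u), and let H*(x; r_x, r_u) denote the optimal value. Define the successor state x⁺ := A x + B u*^0 and the updated reference r_x⁺ := T̂_w^{n_x} r_x, r_u⁺ := T̂_w^{n_u} r_u. Then x⁺ is feasible and H*(x⁺; r_x⁺, r_u⁺) ≤ H*(x; r_x, r_u) − ‖x − (x̂_e* + x̂_c*)‖²_Q − ‖u*^0 − (û_e* + û_c*)‖²_R. -/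
import Mathlib


open Matrix Filter

/-- Vectors in `ℝ^n`. -/
abbrev RVec (n : ℕ) := Fin n → ℝ

/-- A parameter triple `(v_e, v_s, v_c) ∈ (ℝ^m)³` of a harmonic signal. -/
abbrev HTriple (n : ℕ) := RVec n × RVec n × RVec n

/-- A parameter pair `((x̂_e, x̂_s, x̂_c), (û_e, û_s, û_c))`. -/
abbrev HParams (nx nu : ℕ) := HTriple nx × HTriple nu

/-- Value at (relative) time `k` of the harmonic signal parameterized by the triple `v`
with frequency `w`: `v_e + v_s sin(w k) + v_c cos(w k)`. -/
noncomputable def hSeq {m : ℕ} (w : ℝ) (v : HTriple m) (k : ℕ) : RVec m :=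
  v.1 + Real.sin (w * (k : ℝ)) • v.2.1 + Real.cos (w * (k : ℝ)) • v.2.2

/-- The transform `T̂_w^m` acting on parameter triples: the identity acts on `v_e` and the
rotation `T_w^m = [[cos w · I, -sin w · I], [sin w · I, cos w · I]]` acts on `(v_s, v_c)`. -/
noncomputable def hatT {m : ℕ} (w : ℝ) (v : HTriple m) : HTriple m :=
  (v.1, Real.cos w • v.2.1 - Real.sin w • v.2.2, Real.sin w • v.2.1 + Real.cos w • v.2.2)

/-- Membership in the set `D` (harmonic parameters consistent with the dynamics `x⁺ = Ax + Bu`). -/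
def inD {nx nu : ℕ} (A : Matrix (Fin nx) (Fin nx) ℝ) (B : Matrix (Fin nx) (Fin nu) ℝ)
    (w : ℝ) (p : HParams nx nu) : Prop :=
  p.1.1 = A.mulVec p.1.1 + B.mulVec p.2.1 ∧
  Real.cos w • p.1.2.1 - Real.sin w • p.1.2.2 = A.mulVec p.1.2.1 + B.mulVec p.2.2.1 ∧
  Real.sin w • p.1.2.1 + Real.cos w • p.1.2.2 = A.mulVec p.1.2.2 + B.mulVec p.2.2.2

/-- Membership in the set `C_σ` (second-order-cone conditions guaranteeing constraint
satisfaction of the harmonic signal). -/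
def inC {nx nu ny : ℕ} (E : Matrix (Fin ny) (Fin nx) ℝ) (F : Matrix (Fin ny) (Fin nu) ℝ)
    (ylo yhi : RVec ny) (σ : ℝ) (p : HParams nx nu) : Prop :=
  ∀ i : Fin ny,
    Real.sqrt ((E.mulVec p.1.2.1 + F.mulVec p.2.2.1) i ^ 2
        + (E.mulVec p.1.2.2 + F.mulVec p.2.2.2) i ^ 2)
      ≤ yhi i - σ - (E.mulVec p.1.1 + F.mulVec p.2.1) i ∧
    Real.sqrt ((E.mulVec p.1.2.1 + F.mulVec p.2.2.1) i ^ 2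
        + (E.mulVec p.1.2.2 + F.mulVec p.2.2.2) i ^ 2)
      ≤ (E.mulVec p.1.1 + F.mulVec p.2.1) i - ylo i - σ

/-- The set `D ∩ C_σ` of admissible harmonic parameters. -/
def paramSet {nx nu ny : ℕ} (A : Matrix (Fin nx) (Fin nx) ℝ) (B : Matrix (Fin nx) (Fin nu) ℝ)
    (E : Matrix (Fin ny) (Fin nx) ℝ) (F : Matrix (Fin ny) (Fin nu) ℝ)
    (ylo yhi : RVec ny) (w σ : ℝ) : Set (HParams nx nu) :=
  {p | inD A B w p ∧ inC E F ylo yhi σ p}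

/-- The quadratic form `‖v‖²_M = vᵀ M v`. -/
def quadForm {n : ℕ} (M : Matrix (Fin n) (Fin n) ℝ) (v : RVec n) : ℝ :=
  v ⬝ᵥ M.mulVec v

/-- The offset cost `V_h` with reference parameters `r` evaluated at parameters `p`. -/
def Vh {nx nu : ℕ} (Te Th : Matrix (Fin nx) (Fin nx) ℝ) (Se Sh : Matrix (Fin nu) (Fin nu) ℝ)
    (r p : HParams nx nu) : ℝ :=
  quadForm Te (p.1.1 - r.1.1) + quadForm Th (p.1.2.1 - r.1.2.1)
    + quadForm Th (p.1.2.2 - r.1.2.2)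
    + quadForm Se (p.2.1 - r.2.1) + quadForm Sh (p.2.2.1 - r.2.2.1)
    + quadForm Sh (p.2.2.2 - r.2.2.2)

/-- `p` is the unique minimizer of `f` on `S`. -/
def IsUniqueMinOn {α : Type*} (f : α → ℝ) (S : Set α) (p : α) : Prop :=
  p ∈ S ∧ ∀ q ∈ S, q ≠ p → f p < f q

/-- `(xs, us, p)` is a feasible solution of the HMPC optimization problem for the state `x`. -/
def FeasSol {nx nu ny : ℕ} (A : Matrix (Fin nx) (Fin nx) ℝ) (B : Matrix (Fin nx) (Fin nu) ℝ)
    (E : Matrix (Fin ny) (Fin nx) ℝ) (F : Matrix (Fin ny) (Fin nu) ℝ)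
    (ylo yhi : RVec ny) (w σ : ℝ) (N : ℕ) (x : RVec nx)
    (xs : ℕ → RVec nx) (us : ℕ → RVec nu) (p : HParams nx nu) : Prop :=
  xs 0 = x ∧
  (∀ k < N, xs (k + 1) = A.mulVec (xs k) + B.mulVec (us k)) ∧
  (∀ k < N, ∀ i, ylo i ≤ (E.mulVec (xs k) + F.mulVec (us k)) i
      ∧ (E.mulVec (xs k) + F.mulVec (us k)) i ≤ yhi i) ∧
  xs N = hSeq w p.1 N ∧
  inD A B w p ∧ inC E F ylo yhi σ p

/-- `x` belongs to the feasibility region of the HMPC optimization problem. -/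
def Feasible {nx nu ny : ℕ} (A : Matrix (Fin nx) (Fin nx) ℝ) (B : Matrix (Fin nx) (Fin nu) ℝ)
    (E : Matrix (Fin ny) (Fin nx) ℝ) (F : Matrix (Fin ny) (Fin nu) ℝ)
    (ylo yhi : RVec ny) (w σ : ℝ) (N : ℕ) (x : RVec nx) : Prop :=
  ∃ xs us p, FeasSol A B E F ylo yhi w σ N x xs us p

/-- The HMPC cost `J` of a solution `(xs, us, p)` with reference parameters `r`. -/
noncomputable def Jcost {nx nu : ℕ} (Q Te Th : Matrix (Fin nx) (Fin nx) ℝ)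
    (R Se Sh : Matrix (Fin nu) (Fin nu) ℝ) (w : ℝ) (N : ℕ) (r : HParams nx nu)
    (xs : ℕ → RVec nx) (us : ℕ → RVec nu) (p : HParams nx nu) : ℝ :=
  (∑ k ∈ Finset.range N,
      (quadForm Q (xs k - hSeq w p.1 k) + quadForm R (us k - hSeq w p.2 k)))
    + Vh Te Th Se Sh r p

/-- `(xs, us, p)` is an optimal solution of the HMPC optimization problem for state `x` and
reference parameters `r`. -/
noncomputable def OptSol {nx nu ny : ℕ} (A : Matrix (Fin nx) (Fin nx) ℝ)
    (B : Matrix (Fin nx) (Fin nu) ℝ)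
    (E : Matrix (Fin ny) (Fin nx) ℝ) (F : Matrix (Fin ny) (Fin nu) ℝ)
    (ylo yhi : RVec ny) (Q Te Th : Matrix (Fin nx) (Fin nx) ℝ)
    (R Se Sh : Matrix (Fin nu) (Fin nu) ℝ) (w σ : ℝ) (N : ℕ) (r : HParams nx nu)
    (x : RVec nx) (xs : ℕ → RVec nx) (us : ℕ → RVec nu) (p : HParams nx nu) : Prop :=
  FeasSol A B E F ylo yhi w σ N x xs us p ∧
  ∀ xs' us' p', FeasSol A B E F ylo yhi w σ N x xs' us' p' →
    Jcost Q Te Th R Se Sh w N r xs us p ≤ Jcost Q Te Th R Se Sh w N r xs' us' p'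

/-- The optimal value `H*(x; r)` of the HMPC optimization problem. -/
noncomputable def Hstar {nx nu ny : ℕ} (A : Matrix (Fin nx) (Fin nx) ℝ)
    (B : Matrix (Fin nx) (Fin nu) ℝ)
    (E : Matrix (Fin ny) (Fin nx) ℝ) (F : Matrix (Fin ny) (Fin nu) ℝ)
    (ylo yhi : RVec ny) (Q Te Th : Matrix (Fin nx) (Fin nx) ℝ)
    (R Se Sh : Matrix (Fin nu) (Fin nu) ℝ) (w σ : ℝ) (N : ℕ) (r : HParams nx nu)
    (x : RVec nx) : ℝ :=
  sInf {J : ℝ | ∃ xs us p, FeasSol A B E F ylo yhi w σ N x xs us p ∧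
    J = Jcost Q Te Th R Se Sh w N r xs us p}

/-- The controllability matrix `[B, AB, …, A^{ν−1}B]` of the pair `(A, B)`. -/
def ctrbMat {nx nu : ℕ} (A : Matrix (Fin nx) (Fin nx) ℝ) (B : Matrix (Fin nx) (Fin nu) ℝ)
    (ν : ℕ) : Matrix (Fin nx) (Fin ν × Fin nu) ℝ :=
  Matrix.of fun i q => ((A ^ (q.1 : ℕ)) * B) i q.2

/-- Squared Euclidean norm of a vector. -/
def nsq {n : ℕ} (v : RVec n) : ℝ := ∑ i, v i ^ 2

/-- Squared Euclidean norm of a parameter pair. -/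
def pNsq {nx nu : ℕ} (p : HParams nx nu) : ℝ :=
  nsq p.1.1 + nsq p.1.2.1 + nsq p.1.2.2 + nsq p.2.1 + nsq p.2.2.1 + nsq p.2.2.2

/-- `f` is `μ`-strongly convex on the parameter space:
`f z − f y ≥ ⟨∇f(y), z − y⟩ + (μ/2)‖z − y‖²` for all `z, y`. -/
def StrConvVh {nx nu : ℕ} (μ : ℝ) (f : HParams nx nu → ℝ) : Prop :=
  ∀ z y : HParams nx nu, f z - f y ≥ (fderiv ℝ f y) (z - y) + μ / 2 * pNsq (z - y)

/-- The rotation matrix `T_w^m = [[cos w · I, −sin w · I], [sin w · I, cos w · I]] ∈ ℝ^{2m×2m}`. -/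
noncomputable def TwMat (m : ℕ) (w : ℝ) : Matrix (Fin m ⊕ Fin m) (Fin m ⊕ Fin m) ℝ :=
  Matrix.fromBlocks (Real.cos w • (1 : Matrix (Fin m) (Fin m) ℝ))
    (-(Real.sin w • (1 : Matrix (Fin m) (Fin m) ℝ)))
    (Real.sin w • (1 : Matrix (Fin m) (Fin m) ℝ))
    (Real.cos w • (1 : Matrix (Fin m) (Fin m) ℝ))

/-- The matrix `T̂_w^m = diag(I_m, T_w^m) ∈ ℝ^{3m×3m}`. -/
noncomputable def ThatMat (m : ℕ) (w : ℝ) :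
    Matrix (Fin m ⊕ (Fin m ⊕ Fin m)) (Fin m ⊕ (Fin m ⊕ Fin m)) ℝ :=
  Matrix.fromBlocks (1 : Matrix (Fin m) (Fin m) ℝ) 0 0 (TwMat m w)

section Helpers

variable {m n nx nu ny : ℕ}

lemma quadForm_zero (M : Matrix (Fin n) (Fin n) ℝ) : quadForm M (0 : RVec n) = 0 := by
  simp [quadForm]

lemma quadForm_nonneg {M : Matrix (Fin n) (Fin n) ℝ} (hM : M.PosDef) (v : RVec n) :
    0 ≤ quadForm M v := by
  have h := hM.posSemidef.re_dotProduct_nonneg v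
  simpa [quadForm, dotProduct] using h

lemma quad_rot (M : Matrix (Fin n) (Fin n) ℝ) {S C : ℝ} (h : S ^ 2 + C ^ 2 = 1)
    (s c : RVec n) :
    quadForm M (C • s - S • c) + quadForm M (S • s + C • c)
      = quadForm M s + quadForm M c := by
  simp only [quadForm, Matrix.mulVec_add, Matrix.mulVec_sub, Matrix.mulVec_smul,
    dotProduct_add, dotProduct_sub, add_dotProduct,
    sub_dotProduct, smul_dotProduct, dotProduct_smul,
    smul_eq_mul]
  linear_combination (s ⬝ᵥ M.mulVec s + c ⬝ᵥ M.mulVec c) * h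

lemma hSeq_shift (w : ℝ) (v : HTriple m) (k : ℕ) :
    hSeq w (hatT w v) k = hSeq w v (k + 1) := by
  funext i
  simp only [hSeq, hatT, Pi.add_apply, Pi.smul_apply, Pi.sub_apply, smul_eq_mul,
    Nat.cast_add, Nat.cast_one]
  rw [show w * ((k : ℝ) + 1) = w * k + w by ring, Real.sin_add, Real.cos_add]
  ring

lemma hSeq_zero (w : ℝ) (v : HTriple m) : hSeq w v 0 = v.1 + v.2.2 := by
  funext i
  simp [hSeq]

lemma hSeq_dyn {A : Matrix (Fin nx) (Fin nx) ℝ} {B : Matrix (Fin nx) (Fin nu) ℝ}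
    {w : ℝ} {p : HParams nx nu} (hD : inD A B w p) (k : ℕ) :
    hSeq w p.1 (k + 1) = A.mulVec (hSeq w p.1 k) + B.mulVec (hSeq w p.2 k) := by
  obtain ⟨h1, h2, h3⟩ := hD
  funext i
  have e1 := congrFun h1 i
  have e2 := congrFun h2 i
  have e3 := congrFun h3 i
  simp only [Pi.add_apply, Pi.sub_apply, Pi.smul_apply, smul_eq_mul] at e1 e2 e3
  simp only [hSeq, Matrix.mulVec_add, Matrix.mulVec_smul, Pi.add_apply, Pi.smul_apply,
    smul_eq_mul, Nat.cast_add, Nat.cast_one]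
  rw [show w * ((k : ℝ) + 1) = w * k + w by ring, Real.sin_add, Real.cos_add]
  linear_combination e1 + Real.sin (w * k) * e2 + Real.cos (w * k) * e3

lemma inD_hatT {A : Matrix (Fin nx) (Fin nx) ℝ} {B : Matrix (Fin nx) (Fin nu) ℝ}
    {w : ℝ} {p : HParams nx nu} (hD : inD A B w p) :
    inD A B w (hatT w p.1, hatT w p.2) := by
  obtain ⟨h1, h2, h3⟩ := hD
  refine ⟨h1, ?_, ?_⟩ <;>
  · funext i
    have e2 := congrFun h2 i
    have e3 := congrFun h3 i
    simp only [Pi.add_apply, Pi.sub_apply, Pi.smul_apply, smul_eq_mul] at e2 e3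
    simp only [hatT, Matrix.mulVec_add, Matrix.mulVec_sub, Matrix.mulVec_smul,
      Pi.add_apply, Pi.sub_apply, Pi.smul_apply, smul_eq_mul]
    first
    | linear_combination Real.cos w * e2 - Real.sin w * e3
    | linear_combination Real.sin w * e2 + Real.cos w * e3

lemma inC_hatT {E : Matrix (Fin ny) (Fin nx) ℝ} {F : Matrix (Fin ny) (Fin nu) ℝ}
    {ylo yhi : RVec ny} {σ w : ℝ} {p : HParams nx nu}
    (hC : inC E F ylo yhi σ p) :
    inC E F ylo yhi σ (hatT w p.1, hatT w p.2) := by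
  intro i
  have h := hC i
  have hE : (E.mulVec (hatT w p.1).1 + F.mulVec (hatT w p.2).1) i
      = (E.mulVec p.1.1 + F.mulVec p.2.1) i := rfl
  have hs : (E.mulVec (hatT w p.1).2.1 + F.mulVec (hatT w p.2).2.1) i
      = Real.cos w * (E.mulVec p.1.2.1 + F.mulVec p.2.2.1) i
        - Real.sin w * (E.mulVec p.1.2.2 + F.mulVec p.2.2.2) i := by
    simp only [hatT, Matrix.mulVec_sub, Matrix.mulVec_smul, Pi.add_apply, Pi.sub_apply,
      Pi.smul_apply, smul_eq_mul]
    ring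
  have hc : (E.mulVec (hatT w p.1).2.2 + F.mulVec (hatT w p.2).2.2) i
      = Real.sin w * (E.mulVec p.1.2.1 + F.mulVec p.2.2.1) i
        + Real.cos w * (E.mulVec p.1.2.2 + F.mulVec p.2.2.2) i := by
    simp only [hatT, Matrix.mulVec_add, Matrix.mulVec_smul, Pi.add_apply,
      Pi.smul_apply, smul_eq_mul]
    ring
  have hsq : (E.mulVec (hatT w p.1, hatT w p.2).1.2.1
        + F.mulVec (hatT w p.1, hatT w p.2).2.2.1) i ^ 2
      + (E.mulVec (hatT w p.1, hatT w p.2).1.2.2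
        + F.mulVec (hatT w p.1, hatT w p.2).2.2.2) i ^ 2
      = (E.mulVec p.1.2.1 + F.mulVec p.2.2.1) i ^ 2
        + (E.mulVec p.1.2.2 + F.mulVec p.2.2.2) i ^ 2 := by
    show (E.mulVec (hatT w p.1).2.1 + F.mulVec (hatT w p.2).2.1) i ^ 2
      + (E.mulVec (hatT w p.1).2.2 + F.mulVec (hatT w p.2).2.2) i ^ 2 = _
    rw [hs, hc]
    linear_combination ((E.mulVec p.1.2.1 + F.mulVec p.2.2.1) i ^ 2
      + (E.mulVec p.1.2.2 + F.mulVec p.2.2.2) i ^ 2) * Real.sin_sq_add_cos_sq w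
  constructor
  · rw [hsq]; exact h.1
  · rw [hsq]; exact h.2

lemma harmonic_con {E : Matrix (Fin ny) (Fin nx) ℝ} {F : Matrix (Fin ny) (Fin nu) ℝ}
    {ylo yhi : RVec ny} {σ w : ℝ} {p : HParams nx nu}
    (hC : inC E F ylo yhi σ p) (hσ : 0 < σ) (k : ℕ) (i : Fin ny) :
    ylo i ≤ (E.mulVec (hSeq w p.1 k) + F.mulVec (hSeq w p.2 k)) i
      ∧ (E.mulVec (hSeq w p.1 k) + F.mulVec (hSeq w p.2 k)) i ≤ yhi i := by
  obtain ⟨h1, h2⟩ := hC i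
  set s := (E.mulVec p.1.2.1 + F.mulVec p.2.2.1) i with hsdef
  set c := (E.mulVec p.1.2.2 + F.mulVec p.2.2.2) i with hcdef
  set e := (E.mulVec p.1.1 + F.mulVec p.2.1) i with hedef
  have hval : (E.mulVec (hSeq w p.1 k) + F.mulVec (hSeq w p.2 k)) i
      = e + Real.sin (w * k) * s + Real.cos (w * k) * c := by
    simp only [hSeq, Matrix.mulVec_add, Matrix.mulVec_smul, Pi.add_apply,
      Pi.smul_apply, smul_eq_mul, hsdef, hcdef, hedef]
    ring
  have habs : |Real.sin (w * k) * s + Real.cos (w * k) * c| ≤ Real.sqrt (s ^ 2 + c ^ 2) := by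
    rw [← Real.sqrt_sq_eq_abs]
    apply Real.sqrt_le_sqrt
    nlinarith [Real.sin_sq_add_cos_sq (w * k), sq_nonneg (Real.cos (w * k) * s - Real.sin (w * k) * c)]
  rw [hval]
  rw [abs_le] at habs
  constructor <;> linarith [habs.1, habs.2, h1, h2]

lemma Vh_shift {Te Th : Matrix (Fin nx) (Fin nx) ℝ} {Se Sh : Matrix (Fin nu) (Fin nu) ℝ}
    (w : ℝ) (r p : HParams nx nu) :
    Vh Te Th Se Sh (hatT w r.1, hatT w r.2) (hatT w p.1, hatT w p.2)
      = Vh Te Th Se Sh r p := by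
  have hs := Real.sin_sq_add_cos_sq w
  have key : ∀ (k : ℕ) (M : Matrix (Fin k) (Fin k) ℝ) (a b u v : RVec k),
      quadForm M ((Real.cos w • a - Real.sin w • b) - (Real.cos w • u - Real.sin w • v))
        + quadForm M ((Real.sin w • a + Real.cos w • b) - (Real.sin w • u + Real.cos w • v))
      = quadForm M (a - u) + quadForm M (b - v) := by
    intro k M a b u v
    have e1 : (Real.cos w • a - Real.sin w • b) - (Real.cos w • u - Real.sin w • v)
        = Real.cos w • (a - u) - Real.sin w • (b - v) := by module
    have e2 : (Real.sin w • a + Real.cos w • b) - (Real.sin w • u + Real.cos w • v)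
        = Real.sin w • (a - u) + Real.cos w • (b - v) := by module
    rw [e1, e2, quad_rot M hs]
  have k1 := key nx Th p.1.2.1 p.1.2.2 r.1.2.1 r.1.2.2
  have k2 := key nu Sh p.2.2.1 p.2.2.2 r.2.2.1 r.2.2.2
  simp only [Vh, hatT]
  linarith

end Helpers
/-- successor feasibility and the optimal-cost decrease inequality
`H*(x⁺; r⁺) ≤ H*(x; r) − ‖x − (x̂_e* + x̂_c*)‖²_Q − ‖u*⁰ − (û_e* + û_c*)‖²_R`. -/
theorem statement14 {nx nu ny : ℕ}
    (A : Matrix (Fin nx) (Fin nx) ℝ) (B : Matrix (Fin nx) (Fin nu) ℝ)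
    (E : Matrix (Fin ny) (Fin nx) ℝ) (F : Matrix (Fin ny) (Fin nu) ℝ)
    (ylo yhi : RVec ny) (hy : ∀ i, ylo i < yhi i)
    (w σ : ℝ) (hw : 0 < w) (hσ : 0 < σ) (N : ℕ) (hN : 1 ≤ N)
    (Q Te Th : Matrix (Fin nx) (Fin nx) ℝ) (R Se Sh : Matrix (Fin nu) (Fin nu) ℝ)
    (hQ : Q.PosDef) (hR : R.PosDef) (hTe : Te.PosDef) (hSe : Se.PosDef)
    (hTh : Th.PosDef) (hThd : Th.IsDiag) (hSh : Sh.PosDef) (hShd : Sh.IsDiag)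
    (r : HParams nx nu)
    (x : RVec nx) (hx : Feasible A B E F ylo yhi w σ N x)
    (xs : ℕ → RVec nx) (us : ℕ → RVec nu) (p : HParams nx nu)
    (hopt : OptSol A B E F ylo yhi Q Te Th R Se Sh w σ N r x xs us p) :
    Feasible A B E F ylo yhi w σ N (A.mulVec x + B.mulVec (us 0)) ∧
    Hstar A B E F ylo yhi Q Te Th R Se Sh w σ N (hatT w r.1, hatT w r.2)
        (A.mulVec x + B.mulVec (us 0))
      ≤ Hstar A B E F ylo yhi Q Te Th R Se Sh w σ N r x
        - quadForm Q (x - (p.1.1 + p.1.2.2)) - quadForm R (us 0 - (p.2.1 + p.2.2.2)) := by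
  obtain ⟨hfeas, hmin⟩ := hopt
  obtain ⟨h0, hdyn, hcon, hterm, hD, hC⟩ := hfeas
  have hfeas : FeasSol A B E F ylo yhi w σ N x xs us p := ⟨h0, hdyn, hcon, hterm, hD, hC⟩
  -- candidate successor solution
  set p' : HParams nx nu := (hatT w p.1, hatT w p.2) with hp'
  set xs' : ℕ → RVec nx := fun k => if k < N then xs (k + 1) else hSeq w p.1 (k + 1)
    with hxs'
  set us' : ℕ → RVec nu := fun k => if k + 1 < N then us (k + 1) else hSeq w p.2 (k + 1)
    with hus'
  have hxs'k : ∀ k, k < N → xs' k = xs (k + 1) := by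
    intro k hk; simp [hxs', hk]
  have hxs'N : xs' N = hSeq w p.1 (N + 1) := by simp [hxs']
  have hsucc : A.mulVec x + B.mulVec (us 0) = xs 1 := by
    rw [hdyn 0 hN, h0]
  -- feasibility of the candidate
  have hfeas' : FeasSol A B E F ylo yhi w σ N (A.mulVec x + B.mulVec (us 0)) xs' us' p' := by
    refine ⟨?_, ?_, ?_, ?_, inD_hatT hD, inC_hatT hC⟩
    · rw [hxs'k 0 hN, hsucc]
    · intro k hk
      by_cases hk1 : k + 1 < N
      · rw [hxs'k (k + 1) hk1, hxs'k k hk, hdyn (k + 1) hk1]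
        simp [hus', hk1]
      · have hkN : k + 1 = N := by omega
        have h1 : xs' (k + 1) = hSeq w p.1 (k + 1 + 1) := by simp [hxs', hkN]
        have hus'k : us' k = hSeq w p.2 (k + 1) := by simp [hus', hkN]
        rw [h1, hxs'k k hk, hus'k, show xs (k+1) = hSeq w p.1 (k+1) from hkN ▸ hterm]
        exact hSeq_dyn hD (k + 1)
    · intro k hk i
      by_cases hk1 : k + 1 < N
      · rw [hxs'k k hk]
        have hus'k : us' k = us (k + 1) := by simp [hus', hk1]
        rw [hus'k]
        exact hcon (k + 1) hk1 i
      · have hkN : k + 1 = N := by omega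
        rw [hxs'k k hk, show xs (k+1) = hSeq w p.1 (k+1) from hkN ▸ hterm]
        have hus'k : us' k = hSeq w p.2 (k + 1) := by simp [hus', hkN]
        rw [hus'k]
        exact harmonic_con hC hσ (k + 1) i
    · rw [hxs'N, ← hSeq_shift w p.1 N]
  refine ⟨⟨xs', us', p', hfeas'⟩, ?_⟩
  -- cost comparison
  set g : ℕ → ℝ := fun k =>
    quadForm Q (xs k - hSeq w p.1 k) + quadForm R (us k - hSeq w p.2 k) with hg
  have hJ : Jcost Q Te Th R Se Sh w N (hatT w r.1, hatT w r.2) xs' us' p'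
      = Jcost Q Te Th R Se Sh w N r xs us p - g 0 := by
    obtain ⟨M, hM⟩ : ∃ M, N = M + 1 := ⟨N - 1, by omega⟩
    have hstage : ∀ k ∈ Finset.range N,
        quadForm Q (xs' k - hSeq w p'.1 k) + quadForm R (us' k - hSeq w p'.2 k)
          = if k + 1 < N then g (k + 1) else 0 := by
      intro k hk
      rw [Finset.mem_range] at hk
      rw [hxs'k k hk, hSeq_shift, hSeq_shift]
      by_cases hk1 : k + 1 < N
      · have hus'k : us' k = us (k + 1) := by simp [hus', hk1]
        rw [hus'k, if_pos hk1]
      · have hkN : k + 1 = N := by omega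
        have hus'k : us' k = hSeq w p.2 (k + 1) := by simp [hus', hkN]
        rw [hus'k, if_neg hk1, show xs (k+1) = hSeq w p.1 (k+1) from hkN ▸ hterm]
        simp [quadForm_zero]
    have hsum : ∑ k ∈ Finset.range N,
        (quadForm Q (xs' k - hSeq w p'.1 k) + quadForm R (us' k - hSeq w p'.2 k))
        = ∑ k ∈ Finset.range N, g k - g 0 := by
      rw [Finset.sum_congr rfl hstage]
      subst hM
      rw [Finset.sum_range_succ, if_neg (by omega), add_zero]
      rw [Finset.sum_congr rfl (fun k hk => if_pos (by
        rw [Finset.mem_range] at hk; omega))]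
      rw [Finset.sum_range_succ' g M]
      ring
    unfold Jcost
    rw [hsum, hp', Vh_shift]
    ring
  -- optimal value at x equals Jcost of the optimal solution
  have hHx : Hstar A B E F ylo yhi Q Te Th R Se Sh w σ N r x
      = Jcost Q Te Th R Se Sh w N r xs us p := by
    have hrfl : Hstar A B E F ylo yhi Q Te Th R Se Sh w σ N r x
        = sInf {J : ℝ | ∃ xs0 us0 p0, FeasSol A B E F ylo yhi w σ N x xs0 us0 p0 ∧
            J = Jcost Q Te Th R Se Sh w N r xs0 us0 p0} := rfl
    have hmem : Jcost Q Te Th R Se Sh w N r xs us p ∈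
        {J : ℝ | ∃ xs0 us0 p0, FeasSol A B E F ylo yhi w σ N x xs0 us0 p0 ∧
          J = Jcost Q Te Th R Se Sh w N r xs0 us0 p0} := ⟨xs, us, p, hfeas, rfl⟩
    have hlb : ∀ J ∈ {J : ℝ | ∃ xs0 us0 p0, FeasSol A B E F ylo yhi w σ N x xs0 us0 p0 ∧
        J = Jcost Q Te Th R Se Sh w N r xs0 us0 p0},
        Jcost Q Te Th R Se Sh w N r xs us p ≤ J := by
      rintro J ⟨xs0, us0, p0, hf0, rfl⟩
      exact hmin xs0 us0 p0 hf0
    rw [hrfl]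
    exact le_antisymm (csInf_le ⟨_, hlb⟩ hmem) (le_csInf ⟨_, hmem⟩ hlb)
  -- successor optimal value is at most the candidate cost
  have hJnonneg : ∀ (xs0 : ℕ → RVec nx) (us0 : ℕ → RVec nu) (p0 : HParams nx nu)
      (r0 : HParams nx nu), 0 ≤ Jcost Q Te Th R Se Sh w N r0 xs0 us0 p0 := by
    intro xs0 us0 p0 r0
    unfold Jcost Vh
    have h1 : (0:ℝ) ≤ ∑ k ∈ Finset.range N,
        (quadForm Q (xs0 k - hSeq w p0.1 k) + quadForm R (us0 k - hSeq w p0.2 k)) :=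
      Finset.sum_nonneg fun k _ =>
        add_nonneg (quadForm_nonneg hQ _) (quadForm_nonneg hR _)
    have := quadForm_nonneg hTe (p0.1.1 - r0.1.1)
    have := quadForm_nonneg hTh (p0.1.2.1 - r0.1.2.1)
    have := quadForm_nonneg hTh (p0.1.2.2 - r0.1.2.2)
    have := quadForm_nonneg hSe (p0.2.1 - r0.2.1)
    have := quadForm_nonneg hSh (p0.2.2.1 - r0.2.2.1)
    have := quadForm_nonneg hSh (p0.2.2.2 - r0.2.2.2)
    linarith
  have hHle : Hstar A B E F ylo yhi Q Te Th R Se Sh w σ N (hatT w r.1, hatT w r.2)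
      (A.mulVec x + B.mulVec (us 0))
      ≤ Jcost Q Te Th R Se Sh w N (hatT w r.1, hatT w r.2) xs' us' p' := by
    have hrfl : Hstar A B E F ylo yhi Q Te Th R Se Sh w σ N (hatT w r.1, hatT w r.2)
        (A.mulVec x + B.mulVec (us 0))
        = sInf {J : ℝ | ∃ xs0 us0 p0,
            FeasSol A B E F ylo yhi w σ N (A.mulVec x + B.mulVec (us 0)) xs0 us0 p0 ∧
            J = Jcost Q Te Th R Se Sh w N (hatT w r.1, hatT w r.2) xs0 us0 p0} := rfl
    have hmem : Jcost Q Te Th R Se Sh w N (hatT w r.1, hatT w r.2) xs' us' p' ∈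
        {J : ℝ | ∃ xs0 us0 p0,
          FeasSol A B E F ylo yhi w σ N (A.mulVec x + B.mulVec (us 0)) xs0 us0 p0 ∧
          J = Jcost Q Te Th R Se Sh w N (hatT w r.1, hatT w r.2) xs0 us0 p0} :=
      ⟨xs', us', p', hfeas', rfl⟩
    have hlb : ∀ J ∈ {J : ℝ | ∃ xs0 us0 p0,
        FeasSol A B E F ylo yhi w σ N (A.mulVec x + B.mulVec (us 0)) xs0 us0 p0 ∧
        J = Jcost Q Te Th R Se Sh w N (hatT w r.1, hatT w r.2) xs0 us0 p0}, (0:ℝ) ≤ J := by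
      rintro J ⟨xs0, us0, p0, hf0, rfl⟩
      exact hJnonneg xs0 us0 p0 _
    rw [hrfl]
    exact csInf_le ⟨0, hlb⟩ hmem
  have hg0 : g 0 = quadForm Q (x - (p.1.1 + p.1.2.2))
      + quadForm R (us 0 - (p.2.1 + p.2.2.2)) := by
    rw [hg]
    simp only
    rw [hSeq_zero, hSeq_zero, h0]
  linarith [hHle, hJ, hHx, hg0]
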